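/- arXiv:2006.01559 — 6 statements merged into one kernel-verified Lean document; each statement's English description precedes it below -/
import Mathlib

section
/- Let (φₖ) be a sequence of nonnegative reals, M ≥ 0 an integer, and define mₖ with m₀ = 0 and mₖ ≤ min(mₖ₋₁ + 1, M) for k ≥ 1. Suppose for each k ≥ 1 that φₖ ≤ max_{0 ≤ j ≤ m_{k-1}} φ_{k-1-j}. Then the sequence k ↦ max_{0 ≤ j ≤ mₖ} φ_{k-j} is monotonically nonincreasing. -/
/-!
Since `m (k + 1) ≤ m k + 1`, the window ending at `k + 1` lies inside `{k + 1}` together with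
the window ending at `k`, and the new value `φ (k + 1)` is bounded by the old window maximum.
-/

open Finset

def windowMax {α : Type*} [SemilatticeSup α] (f : ℕ → α) (k n : ℕ) : α :=
  (range (n + 1)).sup' nonempty_range_add_one fun j => f (k - j)

section WindowMax

variable {α : Type*} [SemilatticeSup α] (f : ℕ → α)

theorem le_windowMax {k n j : ℕ} (hj : j ≤ n) : f (k - j) ≤ windowMax f k n :=
  le_sup' (fun j => f (k - j)) (mem_range_succ_iff.2 hj)

theorem windowMax_le_iff {k n : ℕ} {a : α} :
    windowMax f k n ≤ a ↔ ∀ j ≤ n, f (k - j) ≤ a := by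
  simp only [windowMax, sup'_le_iff, mem_range_succ_iff]

theorem windowMax_mono {k n n' : ℕ} (h : n ≤ n') : windowMax f k n ≤ windowMax f k n' :=
  sup'_mono _ (range_subset_range.2 (by omega)) _

theorem windowMax_succ_succ (k n : ℕ) :
    windowMax f (k + 1) (n + 1) = f (k + 1) ⊔ windowMax f k n := by
  refine le_antisymm ((windowMax_le_iff f).2 fun j hj => ?_) (sup_le ?_ ?_)
  · rcases j with _ | i
    · exact le_sup_left
    · rw [Nat.add_sub_add_right]
      exact le_sup_of_le_right (le_windowMax f (by omega))
  · exact le_windowMax f (Nat.zero_le _)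
  · refine (windowMax_le_iff f).2 fun i hi => ?_
    simpa only [Nat.add_sub_add_right] using le_windowMax f (k := k + 1) (j := i + 1) (by omega)

end WindowMax

theorem nonmonotone_window_max_antitone_general
    (φ : ℕ → ℝ)
    (M : ℕ) (m : ℕ → ℕ)
    (hm : ∀ k, m (k + 1) ≤ min (m k + 1) M)
    (hdec : ∀ k, φ (k + 1) ≤
      (Finset.range (m k + 1)).sup' Finset.nonempty_range_add_one (fun j => φ (k - j))) :
    ∀ k, (Finset.range (m (k + 1) + 1)).sup' Finset.nonempty_range_add_one
        (fun j => φ (k + 1 - j)) ≤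
      (Finset.range (m k + 1)).sup' Finset.nonempty_range_add_one (fun j => φ (k - j)) := by
  intro k
  calc windowMax φ (k + 1) (m (k + 1))
      ≤ windowMax φ (k + 1) (m k + 1) := windowMax_mono φ ((hm k).trans (min_le_left _ _))
    _ = φ (k + 1) ⊔ windowMax φ k (m k) := windowMax_succ_succ φ k (m k)
    _ ≤ windowMax φ k (m k) := sup_le (hdec k) le_rfl

/-- in the Grippo–Lampariello–Lucidi nonmonotone line search, the
windowed maxima `k ↦ max_{0 ≤ j ≤ mₖ} φ_{k-j}` form a nonincreasing sequence. -/
theorem nonmonotone_window_max_antitone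
    (φ : ℕ → ℝ) (hφ : ∀ k, 0 ≤ φ k)
    (M : ℕ) (m : ℕ → ℕ) (hm0 : m 0 = 0)
    (hm : ∀ k, m (k + 1) ≤ min (m k + 1) M)
    (hdec : ∀ k, φ (k + 1) ≤
      (Finset.range (m k + 1)).sup' Finset.nonempty_range_add_one (fun j => φ (k - j))) :
    ∀ k, (Finset.range (m (k + 1) + 1)).sup' Finset.nonempty_range_add_one
        (fun j => φ (k + 1 - j)) ≤
      (Finset.range (m k + 1)).sup' Finset.nonempty_range_add_one (fun j => φ (k - j)) :=
  nonmonotone_window_max_antitone_general φ M m hm hdec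
end

section
/- Let X : ℝⁿ → ℝⁿ be locally Lipschitz and suppose every element of the Clarke generalized Jacobian ∂X(p̄) at p̄ is invertible. Then there exist λ > 0 and δ > 0 such that for all p with ‖p - p̄‖ < δ and all V ∈ ∂X(p), V is invertible and ‖V⁻¹‖ ≤ λ. -/
/-!
The limiting Jacobians at `p` are the section over `p` of the closure of the graph of `DX`.
This section is closed, and bounded by a local Lipschitz constant, hence compact; closedness of
the graph together with this local bound makes it depend upper semicontinuously on `p`.
By Carathéodory the convex hull of a compact set is compact in finite dimensions, so `∂X(p̄)` is
a compact set of invertible operators. The units form an open set on which inversion is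
continuous, so a thickening of `∂X(p̄)` still consists of invertible operators with uniformly
bounded inverses. Thickenings of convex sets are convex, so by upper semicontinuity `∂X(p)` lies
in that thickening for all `p` close to `p̄`.
-/

open Filter Topology

/-- The Clarke generalized Jacobian of `X` at `p`: the convex hull of all limits of
Jacobians `DX(pₖ)` along sequences `pₖ → p` of points of differentiability of `X`. -/
def clarkeJacobian {n : ℕ}
    (X : EuclideanSpace ℝ (Fin n) → EuclideanSpace ℝ (Fin n))
    (p : EuclideanSpace ℝ (Fin n)) :
    Set (EuclideanSpace ℝ (Fin n) →L[ℝ] EuclideanSpace ℝ (Fin n)) :=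
  convexHull ℝ { H | ∃ (q : ℕ → EuclideanSpace ℝ (Fin n))
      (D : ℕ → (EuclideanSpace ℝ (Fin n) →L[ℝ] EuclideanSpace ℝ (Fin n))),
      (∀ k, HasFDerivAt X (D k) (q k)) ∧
      Tendsto q atTop (𝓝 p) ∧ Tendsto D atTop (𝓝 H) }

open Set Metric

section ConvexHull

theorem convexHull_range_eq_image_stdSimplex {ι E : Type*} [Fintype ι] [AddCommGroup E]
    [Module ℝ E] (v : ι → E) :
    convexHull ℝ (range v) = (fun w : ι → ℝ ↦ ∑ i, w i • v i) '' stdSimplex ℝ ι := by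
  classical
  have h := (Fintype.linearCombination ℝ v).image_convexHull (range fun i ↦ Pi.single i 1)
  rw [convexHull_rangle_single_eq_stdSimplex, ← range_comp] at h
  convert h.symm using 3
  · ext i; simp
  · simp [Fintype.linearCombination_apply]

variable {E : Type*} [AddCommGroup E] [Module ℝ E] [FiniteDimensional ℝ E]

theorem exists_fin_finrank_succ_of_mem_convexHull {s : Set E} {x : E}
    (hx : x ∈ convexHull ℝ s) :
    ∃ v : Fin (Module.finrank ℝ E + 1) → E, range v ⊆ s ∧ x ∈ convexHull ℝ (range v) := by
  rw [convexHull_eq_union] at hx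
  simp only [mem_iUnion] at hx
  obtain ⟨t, hts, hind, hxt⟩ := hx
  have : Nonempty t := (convexHull_nonempty_iff.mp ⟨x, hxt⟩).to_subtype
  have hcard : Fintype.card t ≤ Fintype.card (Fin (Module.finrank ℝ E + 1)) := by
    simpa using hind.card_le_finrank_succ.trans (Nat.succ_le_succ (Submodule.finrank_le _))
  obtain ⟨e⟩ := Function.Embedding.nonempty_of_card_le hcard
  refine ⟨Subtype.val ∘ Function.invFun e, ?_, ?_⟩ <;>
    rwa [(Function.invFun_surjective e.injective).range_comp, Subtype.range_coe]

theorem convexHull_eq_image_stdSimplex_prod_pi (s : Set E) :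
    convexHull ℝ s = (fun p : (Fin (Module.finrank ℝ E + 1) → ℝ) ×
      (Fin (Module.finrank ℝ E + 1) → E) ↦ ∑ i, p.1 i • p.2 i) ''
        (stdSimplex ℝ _ ×ˢ univ.pi fun _ ↦ s) := by
  refine Subset.antisymm (fun x hx ↦ ?_) ?_
  · obtain ⟨v, hvs, hxv⟩ := exists_fin_finrank_succ_of_mem_convexHull hx
    rw [convexHull_range_eq_image_stdSimplex] at hxv
    obtain ⟨w, hw, rfl⟩ := hxv
    exact ⟨(w, v), ⟨hw, fun i _ ↦ hvs (mem_range_self i)⟩, rfl⟩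
  · rintro _ ⟨⟨w, v⟩, ⟨hw, hv⟩, rfl⟩
    refine convexHull_mono (range_subset_iff.2 fun i ↦ hv i (mem_univ i)) ?_
    rw [convexHull_range_eq_image_stdSimplex]
    exact mem_image_of_mem _ hw

theorem IsCompact.convexHull [TopologicalSpace E] [ContinuousAdd E] [ContinuousSMul ℝ E]
    {s : Set E} (hs : IsCompact s) : IsCompact (convexHull ℝ s) := by
  rw [convexHull_eq_image_stdSimplex_prod_pi]
  exact ((isCompact_stdSimplex ℝ _).prod (isCompact_univ_pi fun _ ↦ hs)).image (by fun_prop)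

end ConvexHull

theorem IsCompact.exists_thickening_isUnit_norm_ringInverse_le {R : Type*} [NormedRing R]
    [CompleteSpace R] [ProperSpace R] {K : Set R} (hK : IsCompact K) (hunit : ∀ x ∈ K, IsUnit x) :
    ∃ ε > 0, ∃ C, ∀ x ∈ thickening ε K, IsUnit x ∧ ‖Ring.inverse x‖ ≤ C := by
  obtain ⟨ε, hε, hKε⟩ := hK.exists_cthickening_subset_open Units.isOpen hunit
  have hcont : ContinuousOn Ring.inverse (cthickening ε K) := fun x hx ↦ by
    obtain ⟨u, rfl⟩ := hKε hx
    exact (NormedRing.inverse_continuousAt u).continuousWithinAt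
  obtain ⟨C, hC⟩ := hK.cthickening.exists_bound_of_continuousOn hcont
  exact ⟨ε, hε, C, fun x hx ↦
    ⟨hKε (thickening_subset_cthickening ε K hx), hC x (thickening_subset_cthickening ε K hx)⟩⟩

theorem ContinuousLinearMap.isUnit_iff_isInvertible {R M : Type*} [Semiring R]
    [TopologicalSpace M] [AddCommMonoid M] [Module R M] {f : M →L[R] M} :
    IsUnit f ↔ f.IsInvertible :=
  ⟨fun ⟨u, hu⟩ ↦ ⟨ContinuousLinearEquiv.unitsEquiv R M u, hu ▸ rfl⟩,
    fun ⟨e, he⟩ ↦ ⟨(ContinuousLinearEquiv.unitsEquiv R M).symm e, he ▸ rfl⟩⟩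

section Clarke

variable {E F : Type*} [NormedAddCommGroup E] [NormedSpace ℝ E]
  [NormedAddCommGroup F] [NormedSpace ℝ F]

def fderivGraph (X : E → F) : Set (E × (E →L[ℝ] F)) := {x | HasFDerivAt X x.2 x.1}

def clarkeLimits (X : E → F) (p : E) : Set (E →L[ℝ] F) :=
  {H | (p, H) ∈ closure (fderivGraph X)}

theorem mem_clarkeLimits_iff {X : E → F} {p : E} {H : E →L[ℝ] F} :
    H ∈ clarkeLimits X p ↔ ∃ (q : ℕ → E) (D : ℕ → E →L[ℝ] F), (∀ k, HasFDerivAt X (D k) (q k)) ∧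
      Tendsto q atTop (𝓝 p) ∧ Tendsto D atTop (𝓝 H) := by
  simp only [clarkeLimits, mem_ofPred_eq, mem_closure_iff_seq_limit, nhds_prod_eq,
    tendsto_prod_iff']
  constructor
  · rintro ⟨x, hx, hq, hD⟩
    exact ⟨fun k ↦ (x k).1, fun k ↦ (x k).2, hx, hq, hD⟩
  · rintro ⟨q, D, hx, hq, hD⟩
    exact ⟨fun k ↦ (q k, D k), hx, hq, hD⟩

theorem clarkeJacobian_eq_convexHull_clarkeLimits {n : ℕ}
    (X : EuclideanSpace ℝ (Fin n) → EuclideanSpace ℝ (Fin n)) (p : EuclideanSpace ℝ (Fin n)) :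
    clarkeJacobian X p = convexHull ℝ (clarkeLimits X p) := by
  simp only [clarkeJacobian, ← mem_clarkeLimits_iff, ofPred_mem_eq]

theorem isClosed_clarkeLimits (X : E → F) (p : E) : IsClosed (clarkeLimits X p) :=
  isClosed_closure.preimage (Continuous.prodMk_right p)

theorem norm_le_of_mem_clarkeLimits {X : E → F} {K : NNReal} {U : Set E} {p : E}
    {H : E →L[ℝ] F} (hU : IsOpen U) (hX : LipschitzOnWith K X U) (hp : p ∈ U)
    (hH : H ∈ clarkeLimits X p) : ‖H‖ ≤ K := by
  have hsub : U ×ˢ univ ∩ fderivGraph X ⊆ {x | ‖x.2‖ ≤ K} := fun x ⟨⟨hxU, _⟩, hx⟩ ↦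
    HasFDerivAt.le_of_lipschitzOn hx (hU.mem_nhds hxU) hX
  exact closure_minimal hsub (isClosed_le (by fun_prop) continuous_const)
    ((hU.prod isOpen_univ).inter_closure ⟨⟨hp, mem_univ H⟩, hH⟩)

variable [FiniteDimensional ℝ E] [FiniteDimensional ℝ F]

theorem isCompact_clarkeLimits {X : E → F} (hX : LocallyLipschitz X) (p : E) :
    IsCompact (clarkeLimits X p) := by
  obtain ⟨K, t, ht, hlip⟩ := hX p
  obtain ⟨U, hUt, hU, hpU⟩ := _root_.mem_nhds_iff.mp ht
  exact (isCompact_closedBall 0 K).of_isClosed_subset (isClosed_clarkeLimits X p) fun H hH ↦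
    mem_closedBall_zero_iff.mpr (norm_le_of_mem_clarkeLimits hU (hlip.mono hUt) hpU hH)

theorem eventually_clarkeLimits_subset {X : E → F} (hX : LocallyLipschitz X) {p : E}
    {U : Set (E →L[ℝ] F)} (hU : IsOpen U) (hpU : clarkeLimits X p ⊆ U) :
    ∀ᶠ q in 𝓝 p, clarkeLimits X q ⊆ U := by
  obtain ⟨K, t, ht, hlip⟩ := hX p
  obtain ⟨V, hVt, hV, hpV⟩ := _root_.mem_nhds_iff.mp ht
  have hfar : ∀ᶠ q in 𝓝 p, ∀ H ∈ closedBall 0 (K : ℝ) \ U, H ∉ clarkeLimits X q :=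
    ((isCompact_closedBall 0 _).diff hU).eventually_forall_of_forall_eventually
      fun H hH ↦ isClosed_closure.isOpen_compl.mem_nhds fun h ↦ hH.2 (hpU h)
  filter_upwards [hfar, hV.mem_nhds hpV] with q hq hqV H hH
  by_contra hHU
  exact hq H ⟨mem_closedBall_zero_iff.mpr
    (norm_le_of_mem_clarkeLimits hV (hlip.mono hVt) hqV hH), hHU⟩ hH

end Clarke

/-- regularity of `X` at `p̄` (all elements of the Clarke generalized
Jacobian invertible) propagates to a neighborhood, with a uniform inverse bound. -/
theorem regularity_propagates {n : ℕ}
    (X : EuclideanSpace ℝ (Fin n) → EuclideanSpace ℝ (Fin n))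
    (hX : LocallyLipschitz X)
    (pbar : EuclideanSpace ℝ (Fin n))
    (hreg : ∀ V ∈ clarkeJacobian X pbar,
      ∃ W : EuclideanSpace ℝ (Fin n) ≃L[ℝ] EuclideanSpace ℝ (Fin n),
        (W : EuclideanSpace ℝ (Fin n) →L[ℝ] EuclideanSpace ℝ (Fin n)) = V) :
    ∃ lam > (0 : ℝ), ∃ δ > (0 : ℝ), ∀ p : EuclideanSpace ℝ (Fin n), ‖p - pbar‖ < δ →
      ∀ V ∈ clarkeJacobian X p,
        ∃ W : EuclideanSpace ℝ (Fin n) ≃L[ℝ] EuclideanSpace ℝ (Fin n),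
          (W : EuclideanSpace ℝ (Fin n) →L[ℝ] EuclideanSpace ℝ (Fin n)) = V ∧
          ‖(W.symm : EuclideanSpace ℝ (Fin n) →L[ℝ] EuclideanSpace ℝ (Fin n))‖ ≤ lam := by
  set S := clarkeLimits X pbar
  have hunit : ∀ V ∈ convexHull ℝ S, IsUnit V := fun V hV ↦
    ContinuousLinearMap.isUnit_iff_isInvertible.mpr
      (hreg V ((clarkeJacobian_eq_convexHull_clarkeLimits X pbar).symm ▸ hV))
  obtain ⟨ε, hε, C, hC⟩ :=
    (isCompact_clarkeLimits hX pbar).convexHull.exists_thickening_isUnit_norm_ringInverse_le hunit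
  obtain ⟨δ, hδ, hnear⟩ := Metric.eventually_nhds_iff.mp
    (eventually_clarkeLimits_subset hX isOpen_thickening (self_subset_thickening hε S))
  refine ⟨max C 1, by positivity, δ, hδ, fun p hp V hV ↦ ?_⟩
  have hVε : V ∈ thickening ε (convexHull ℝ S) := by
    rw [clarkeJacobian_eq_convexHull_clarkeLimits] at hV
    exact convexHull_min ((hnear (dist_eq_norm p pbar ▸ hp)).trans
      (thickening_subset_of_subset ε (subset_convexHull ℝ S)))
      ((convex_convexHull ℝ S).thickening ε) hV
  obtain ⟨hVunit, hVinv⟩ := hC V hVε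
  obtain ⟨W, rfl⟩ := ContinuousLinearMap.isUnit_iff_isInvertible.mp hVunit
  refine ⟨W, rfl, ?_⟩
  rw [← ContinuousLinearMap.inverse_equiv, ← ContinuousLinearMap.ringInverse_eq_inverse]
  exact hVinv.trans (le_max_left _ _)
end

section
/- Suppose X : ℝⁿ → ℝⁿ satisfies the semismooth-type bound ‖X(p*) - X(p) - V(p* - p)‖ ≤ ε ‖p - p*‖^{1+μ} for all p in B_δ(p*) and all V ∈ ∂X(p), with X(p*) = 0, ‖V⁻¹‖ ≤ λ/(1 - ελ) for all such V, and 0 ≤ μ ≤ 1, ελ < 1. Then for every p ∈ B_δ(p*) and V ∈ ∂X(p), the Newton iterate p⁺ = p - V⁻¹ X(p) satisfies ‖p⁺ - p*‖ ≤ (ελ/(1 - ελ)) ‖p - p*‖^{1+μ}. -/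
open Filter Topology

open Metric Set

/-- local Newton contraction (Euclidean version of Lemma 4.1). -/
theorem newton_iteration_contraction {n : ℕ}
    (X : EuclideanSpace ℝ (Fin n) → EuclideanSpace ℝ (Fin n))
    (pstar : EuclideanSpace ℝ (Fin n)) (hzero : X pstar = 0)
    (δ ε lam μ : ℝ) (hδ : 0 < δ) (hε : 0 < ε) (hlam : 0 < lam)
    (hμ : μ ∈ Icc (0 : ℝ) 1) (hεlam : ε * lam < 1)
    (hss : ∀ p ∈ ball pstar δ, ∀ V ∈ clarkeJacobian X p,
      ‖X pstar - X p - V (pstar - p)‖ ≤ ε * ‖p - pstar‖ ^ (1 + μ))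
    (hinv : ∀ p ∈ ball pstar δ, ∀ V ∈ clarkeJacobian X p,
      ∀ W : EuclideanSpace ℝ (Fin n) ≃L[ℝ] EuclideanSpace ℝ (Fin n),
        (W : EuclideanSpace ℝ (Fin n) →L[ℝ] EuclideanSpace ℝ (Fin n)) = V →
        ‖(W.symm : EuclideanSpace ℝ (Fin n) →L[ℝ] EuclideanSpace ℝ (Fin n))‖ ≤
          lam / (1 - ε * lam)) :
    ∀ p ∈ ball pstar δ, ∀ V ∈ clarkeJacobian X p,
      ∀ W : EuclideanSpace ℝ (Fin n) ≃L[ℝ] EuclideanSpace ℝ (Fin n),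
        (W : EuclideanSpace ℝ (Fin n) →L[ℝ] EuclideanSpace ℝ (Fin n)) = V →
        ‖(p - W.symm (X p)) - pstar‖ ≤
          (ε * lam / (1 - ε * lam)) * ‖p - pstar‖ ^ (1 + μ) := by
  intro p hp V hV W hWV
  have hres := hss p hp V hV
  have hinvb := hinv p hp V hV W hWV
  have key : (p - W.symm (X p)) - pstar =
      W.symm (X pstar - X p - V (pstar - p)) := by
    rw [← hWV]
    have : (W : EuclideanSpace ℝ (Fin n) →L[ℝ] EuclideanSpace ℝ (Fin n)) (pstar - p)
        = W (pstar - p) := rfl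
    apply W.injective
    simp [map_sub, ContinuousLinearEquiv.apply_symm_apply, hzero]
    abel
  rw [key]
  calc ‖W.symm (X pstar - X p - V (pstar - p))‖
      ≤ ‖(W.symm : EuclideanSpace ℝ (Fin n) →L[ℝ] EuclideanSpace ℝ (Fin n))‖ *
        ‖X pstar - X p - V (pstar - p)‖ :=
        (W.symm : EuclideanSpace ℝ (Fin n) →L[ℝ] EuclideanSpace ℝ (Fin n)).le_opNorm _
    _ ≤ (lam / (1 - ε * lam)) * (ε * ‖p - pstar‖ ^ (1 + μ)) := by
        have h1 : 0 < 1 - ε * lam := by linarith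
        apply mul_le_mul hinvb hres (norm_nonneg _)
        positivity
    _ = (ε * lam / (1 - ε * lam)) * ‖p - pstar‖ ^ (1 + μ) := by ring
end

section
/- Under the assumptions of the previous contraction estimate, with additionally (ελ/(1-ελ)) δ^μ < 1, for every starting point p₀ ∈ B_δ(p*) the Newton sequence p_{k+1} = p_k - V_k⁻¹ X(p_k) (with arbitrary choices V_k ∈ ∂X(p_k)) is well defined, remains in B_δ(p*), and converges to p* with ‖p_{k+1} - p*‖ ≤ (ελ/(1-ελ)) ‖p_k - p*‖^{1+μ} for all k. -/
open Filter Topology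

open Metric Set

/-- local convergence of the nonsmooth Newton method with order `1+μ`
(Euclidean version of Theorem 3.1). -/
theorem newton_method_local_convergence {n : ℕ}
    (X : EuclideanSpace ℝ (Fin n) → EuclideanSpace ℝ (Fin n))
    (pstar : EuclideanSpace ℝ (Fin n)) (hzero : X pstar = 0)
    (δ ε lam μ : ℝ) (hδ : 0 < δ) (hε : 0 < ε) (hlam : 0 < lam)
    (hμ : μ ∈ Icc (0 : ℝ) 1) (hεlam : ε * lam < 1)
    (hcontr : (ε * lam / (1 - ε * lam)) * δ ^ μ < 1)
    (hss : ∀ p ∈ ball pstar δ, ∀ V ∈ clarkeJacobian X p,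
      ‖X pstar - X p - V (pstar - p)‖ ≤ ε * ‖p - pstar‖ ^ (1 + μ))
    (hinv : ∀ p ∈ ball pstar δ, ∀ V ∈ clarkeJacobian X p,
      ∀ W : EuclideanSpace ℝ (Fin n) ≃L[ℝ] EuclideanSpace ℝ (Fin n),
        (W : EuclideanSpace ℝ (Fin n) →L[ℝ] EuclideanSpace ℝ (Fin n)) = V →
        ‖(W.symm : EuclideanSpace ℝ (Fin n) →L[ℝ] EuclideanSpace ℝ (Fin n))‖ ≤
          lam / (1 - ε * lam))
    (p : ℕ → EuclideanSpace ℝ (Fin n)) (hp0 : p 0 ∈ ball pstar δ)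
    (V : ℕ → (EuclideanSpace ℝ (Fin n) ≃L[ℝ] EuclideanSpace ℝ (Fin n)))
    (hV : ∀ k, ((V k : EuclideanSpace ℝ (Fin n) →L[ℝ] EuclideanSpace ℝ (Fin n)) :
      EuclideanSpace ℝ (Fin n) →L[ℝ] EuclideanSpace ℝ (Fin n)) ∈ clarkeJacobian X (p k))
    (hrec : ∀ k, p (k + 1) = p k - (V k).symm (X (p k))) :
    (∀ k, p k ∈ ball pstar δ) ∧
    (∀ k, ‖p (k + 1) - pstar‖ ≤ (ε * lam / (1 - ε * lam)) * ‖p k - pstar‖ ^ (1 + μ)) ∧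
    Tendsto p atTop (𝓝 pstar) := by

  obtain ⟨hμ0, hμ1⟩ := hμ
  have h1 : 0 < 1 - ε * lam := by linarith
  set c := ε * lam / (1 - ε * lam) with hc
  have hc0 : 0 ≤ c := by positivity
  -- key contraction estimate
  have key : ∀ k, p k ∈ ball pstar δ →
      ‖p (k + 1) - pstar‖ ≤ c * ‖p k - pstar‖ ^ (1 + μ) := by
    intro k hk
    have hVk := hV k
    have hinvk := hinv (p k) hk _ hVk (V k) rfl
    have hssk := hss (p k) hk _ hVk
    have heq : p (k + 1) - pstar
        = (V k).symm (X pstar - X (p k) - (V k) (pstar - p k)) := by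
      rw [hrec k, hzero]
      have h2 : (V k).symm ((V k) (pstar - p k)) = pstar - p k :=
        (V k).symm_apply_apply _
      rw [map_sub, map_sub, map_zero, h2]
      abel
    calc ‖p (k + 1) - pstar‖
        = ‖((V k).symm : EuclideanSpace ℝ (Fin n) →L[ℝ] EuclideanSpace ℝ (Fin n))
            (X pstar - X (p k) - (V k) (pstar - p k))‖ := by rw [heq]; rfl
      _ ≤ ‖((V k).symm : EuclideanSpace ℝ (Fin n) →L[ℝ] EuclideanSpace ℝ (Fin n))‖ *
            ‖X pstar - X (p k) - (V k) (pstar - p k)‖ :=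
          ContinuousLinearMap.le_opNorm _ _
      _ ≤ (lam / (1 - ε * lam)) * (ε * ‖p k - pstar‖ ^ (1 + μ)) := by
          apply mul_le_mul hinvk hssk (norm_nonneg _) (by positivity)
      _ = c * ‖p k - pstar‖ ^ (1 + μ) := by rw [hc]; ring
  set r := c * δ ^ μ with hr
  have hδμ : (0:ℝ) ≤ δ ^ μ := Real.rpow_nonneg hδ.le μ
  have hr0 : 0 ≤ r := mul_nonneg hc0 hδμ
  have hr1 : r < 1 := hcontr
  -- linear bound
  have lin : ∀ k, p k ∈ ball pstar δ →
      c * ‖p k - pstar‖ ^ (1 + μ) ≤ r * ‖p k - pstar‖ := by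
    intro k hk
    set x := ‖p k - pstar‖ with hx
    have hx0 : 0 ≤ x := norm_nonneg _
    have hxδ : x < δ := by rwa [mem_ball_iff_norm] at hk
    have hsplit : x ^ (1 + μ) = x * x ^ μ := by
      rw [Real.rpow_add' hx0 (by linarith), Real.rpow_one]
    have hxμ : x ^ μ ≤ δ ^ μ := Real.rpow_le_rpow hx0 hxδ.le hμ0
    calc c * x ^ (1 + μ) = c * (x * x ^ μ) := by rw [hsplit]
      _ ≤ c * (x * δ ^ μ) := by
          apply mul_le_mul_of_nonneg_left (mul_le_mul_of_nonneg_left hxμ hx0) hc0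
      _ = r * x := by rw [hr]; ring
  have hball : ∀ k, p k ∈ ball pstar δ := by
    intro k
    induction k with
    | zero => exact hp0
    | succ k ih =>
      have h3 : ‖p (k + 1) - pstar‖ ≤ r * ‖p k - pstar‖ :=
        (key k ih).trans (lin k ih)
      have hxδ : ‖p k - pstar‖ < δ := by rwa [mem_ball_iff_norm] at ih
      rw [mem_ball_iff_norm]
      calc ‖p (k + 1) - pstar‖ ≤ r * ‖p k - pstar‖ := h3
        _ ≤ 1 * ‖p k - pstar‖ := by
            apply mul_le_mul_of_nonneg_right hr1.le (norm_nonneg _)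
        _ = ‖p k - pstar‖ := one_mul _
        _ < δ := hxδ
  refine ⟨hball, fun k => key k (hball k), ?_⟩
  have geom : ∀ k, ‖p k - pstar‖ ≤ r ^ k * ‖p 0 - pstar‖ := by
    intro k
    induction k with
    | zero => simp
    | succ k ih =>
      calc ‖p (k + 1) - pstar‖ ≤ r * ‖p k - pstar‖ :=
            (key k (hball k)).trans (lin k (hball k))
        _ ≤ r * (r ^ k * ‖p 0 - pstar‖) := mul_le_mul_of_nonneg_left ih hr0
        _ = r ^ (k + 1) * ‖p 0 - pstar‖ := by ring
  rw [tendsto_iff_dist_tendsto_zero]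
  have h4 : Tendsto (fun k => r ^ k * ‖p 0 - pstar‖) atTop (𝓝 0) := by
    have := tendsto_pow_atTop_nhds_zero_of_lt_one hr0 hr1
    simpa using this.mul_const ‖p 0 - pstar‖
  apply squeeze_zero (fun k => dist_nonneg) (fun k => ?_) h4
  rw [dist_eq_norm]
  exact geom _
end

section
/- Suppose X : ℝⁿ → ℝⁿ is locally Lipschitz, X(p*) = 0, and for all p near p* and V ∈ ∂X(p) one has ‖V⁻¹‖ ≤ λ/(1-ελ) and ‖V‖ ≤ L. Then there exist δ > 0 and C > 0 such that ‖p - p*‖ ≤ C ‖X(p)‖ for all p ∈ B_δ(p*). In particular, p* is an isolated zero of X. -/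
/-!
Let `μ = λ / (1 - ελ)`, so that every `V ∈ ∂X(p*)` satisfies `‖V u‖ ≥ μ⁻¹ ‖u‖`. By upper
semicontinuity of the Clarke Jacobian, near `p*` every Jacobian `DX(q)` lies within `μ⁻¹ / 2` of
the convex set `∂X(p*)`, so it satisfies `‖DX(q) u‖ ≥ (2μ)⁻¹ ‖u‖`, and so does every operator in
that convex neighbourhood. A Lipschitz map is differentiable almost everywhere, hence almost
everywhere on almost every translate of the segment `[p*, p]`; on such a translate `X(b) - X(a)`
is an average of vectors `DX(q)(b - a)`, so `‖X(b) - X(a)‖ ≥ (2μ)⁻¹ ‖b - a‖`. Letting the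
translate tend to `[p*, p]` gives `‖p - p*‖ ≤ 2μ ‖X(p)‖`.
-/

open Filter Topology

open Metric

open MeasureTheory Set
open scoped NNReal

section Interval

variable {F : Type*} [NormedAddCommGroup F] [NormedSpace ℝ F] [CompleteSpace F]
  {g : ℝ → F} {K : ℝ≥0} {a b : ℝ}

theorem LipschitzOnWith.intervalIntegrable_deriv (hg : LipschitzOnWith K g (uIcc a b)) :
    IntervalIntegrable (deriv g) volume a b := by
  rw [intervalIntegrable_iff', uIcc, integrableOn_Icc_iff_integrableOn_Ioo]
  refine Measure.integrableOn_of_bounded (M := K) (by simp)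
    (stronglyMeasurable_deriv g).aestronglyMeasurable ?_
  refine (ae_restrict_iff' measurableSet_Ioo).2 (.of_forall fun t ht => ?_)
  exact norm_deriv_le_of_lipschitzOn (Icc_mem_nhds ht.1 ht.2) hg

/-- Reduced to the scalar fundamental theorem of calculus for absolutely continuous functions by
testing against continuous linear functionals. -/
theorem LipschitzOnWith.integral_deriv_eq_sub
    (hg : LipschitzOnWith K g (uIcc a b))
    (hd : ∀ᵐ t, t ∈ uIcc a b → DifferentiableAt ℝ g t) :
    ∫ t in a..b, deriv g t = g b - g a := by
  refine (SeparatingDual.eq_iff_forall_dual_eq (R := ℝ)).2 fun φ => ?_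
  have hφg : LipschitzOnWith (‖φ‖₊ * K) (fun t => φ (g t)) (uIcc a b) :=
    φ.lipschitz.comp_lipschitzOnWith hg
  rw [← φ.intervalIntegral_comp_comm hg.intervalIntegrable_deriv, map_sub,
    ← hφg.absolutelyContinuousOnInterval.integral_deriv_eq_sub]
  refine intervalIntegral.integral_congr_ae ?_
  filter_upwards [hd] with t ht htab
  exact ((φ.hasFDerivAt.comp_hasDerivAt t (ht (uIoc_subset_uIcc htab)).hasDerivAt).deriv).symm

theorem LipschitzOnWith.sub_mem_of_ae_deriv_mem (hg : LipschitzOnWith K g (Icc 0 1))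
    {S : Set F} (hS : Convex ℝ S) (hSc : IsClosed S)
    (hd : ∀ᵐ t, t ∈ Icc (0 : ℝ) 1 → DifferentiableAt ℝ g t ∧ deriv g t ∈ S) :
    g 1 - g 0 ∈ S := by
  rw [← uIcc_of_le zero_le_one] at hg hd
  have : IsProbabilityMeasure (volume.restrict (Ioc (0 : ℝ) 1)) := ⟨by simp⟩
  rw [← hg.integral_deriv_eq_sub (hd.mono fun t ht htI => (ht htI).1),
    intervalIntegral.integral_of_le zero_le_one]
  refine hS.integral_mem hSc ((ae_restrict_iff' measurableSet_Ioc).2 ?_)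
    (hg.intervalIntegrable_deriv.1)
  filter_upwards [hd] with t ht htI
  exact (ht (Ioc_subset_Icc_self.trans (uIcc_of_le zero_le_one).symm.subset htI)).2

end Interval

section MeanValue

variable {E : Type*} [NormedAddCommGroup E] [NormedSpace ℝ E]

theorem ae_ae_add_smul [MeasurableSpace E] [BorelSpace E] [SecondCountableTopology E]
    (μ : Measure E) [μ.IsAddRightInvariant] [SFinite μ] {P : E → Prop} (hP : ∀ᵐ x ∂μ, P x)
    (v : E) : ∀ᵐ z ∂μ, ∀ᵐ t : ℝ, P (z + t • v) := by
  set N := toMeasurable μ {x | ¬P x}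
  have hN : MeasurableSet {zt : E × ℝ | zt.1 + zt.2 • v ∉ N} :=
    ((measurableSet_toMeasurable _ _).preimage (by fun_prop)).compl
  have hline : ∀ᵐ t : ℝ, ∀ᵐ z ∂μ, z + t • v ∉ N := .of_forall fun t => by
    rw [ae_iff]
    simp only [not_not]
    rw [← preimage_ofPred_eq, measure_preimage_add_right, ofPred_mem_eq, measure_toMeasurable]
    exact ae_iff.1 hP
  filter_upwards [(Measure.ae_ae_comm hN).2 hline] with z hz
  filter_upwards [hz] with t ht
  by_contra h
  exact ht (subset_toMeasurable μ _ h)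

variable {F : Type*} [NormedAddCommGroup F] [NormedSpace ℝ F]
  {X : E → F} {s : Set E} {K : ℝ≥0} {T : Set (E →L[ℝ] F)} {c : ℝ}

theorem mul_norm_le_norm_sub_of_ae_differentiableAt [CompleteSpace F] (hs : Convex ℝ s)
    (hX : LipschitzOnWith K X s) (hT : Convex ℝ T)
    (hXT : ∀ q ∈ s, DifferentiableAt ℝ X q → fderiv ℝ X q ∈ T)
    (hc : ∀ M ∈ T, ∀ u, c * ‖u‖ ≤ ‖M u‖) {a v : E} (ha : a ∈ s) (hav : a + v ∈ s)
    (hd : ∀ᵐ t : ℝ, a + t • v ∈ s → DifferentiableAt ℝ X (a + t • v)) :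
    c * ‖v‖ ≤ ‖X (a + v) - X a‖ := by
  set S := closure (ContinuousLinearMap.apply ℝ F v '' T)
  have hmaps : MapsTo (fun t : ℝ => a + t • v) (Icc 0 1) s := fun _ ht => hs.add_smul_mem ha hav ht
  have hlip : LipschitzOnWith (K * ‖v‖₊) (fun t : ℝ => X (a + t • v)) (Icc 0 1) := by
    refine hX.comp (LipschitzWith.lipschitzOnWith ?_) hmaps
    exact LipschitzWith.of_dist_le_mul fun t t' => by
      simp [dist_eq_norm, ← sub_smul, norm_smul, mul_comm]
  have hmem : X (a + (1 : ℝ) • v) - X (a + (0 : ℝ) • v) ∈ S := by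
    refine hlip.sub_mem_of_ae_deriv_mem ((hT.linear_image _).closure) isClosed_closure ?_
    filter_upwards [hd] with t ht htI
    have hγ : HasDerivAt (fun t : ℝ => a + t • v) v t := by
      simpa using ((hasDerivAt_id t).smul_const v).const_add a
    have hdiff := ht (hmaps htI)
    have hderiv := hdiff.hasFDerivAt.comp_hasDerivAt t hγ
    exact ⟨hderiv.differentiableAt, hderiv.deriv ▸
      subset_closure (mem_image_of_mem _ (hXT _ (hmaps htI) hdiff))⟩
  have hS : S ⊆ {w | c * ‖v‖ ≤ ‖w‖} := closure_minimal
    (image_subset_iff.2 fun M hM => hc M hM v) (isClosed_le continuous_const continuous_norm)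
  simpa using hS hmem

theorem mul_norm_sub_le_norm_sub_of_fderiv_mem [FiniteDimensional ℝ E] [FiniteDimensional ℝ F]
    (hso : IsOpen s) (hs : Convex ℝ s) (hX : LipschitzOnWith K X s) (hT : Convex ℝ T)
    (hXT : ∀ q ∈ s, DifferentiableAt ℝ X q → fderiv ℝ X q ∈ T)
    (hc : ∀ M ∈ T, ∀ u, c * ‖u‖ ≤ ‖M u‖) {a b : E} (ha : a ∈ s) (hb : b ∈ s) :
    c * ‖b - a‖ ≤ ‖X b - X a‖ := by
  borelize E
  set v := b - a
  have hdiff : ∀ᵐ x ∂(Measure.addHaar : Measure E), x ∈ s → DifferentiableAt ℝ X x := by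
    filter_upwards [hX.ae_differentiableWithinAt_of_mem] with x hx hxs
    exact (hx hxs).differentiableAt (hso.mem_nhds hxs)
  have hgood : ∃ᶠ z in 𝓝 a, ∀ᵐ t : ℝ, z + t • v ∈ s → DifferentiableAt ℝ X (z + t • v) :=
    mem_closure_iff_frequently.1 (Measure.dense_of_ae (ae_ae_add_smul _ hdiff v) a)
  have hshift : Tendsto (· + v) (𝓝 a) (𝓝 b) := by
    simpa [v] using (continuous_add_const v).tendsto a
  have hnear : ∀ᶠ z in 𝓝 a, z ∈ s ∧ z + v ∈ s :=
    Filter.Eventually.and (hso.mem_nhds ha) (hshift.eventually (hso.mem_nhds hb))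
  have hlim : Tendsto (fun z => ‖X (z + v) - X z‖) (𝓝 a) (𝓝 ‖X b - X a‖) :=
    (((hX.continuousOn.continuousAt (hso.mem_nhds hb)).tendsto.comp hshift).sub
      (hX.continuousOn.continuousAt (hso.mem_nhds ha)).tendsto).norm
  refine isClosed_Ici.mem_of_frequently_of_tendsto ((hgood.and_eventually hnear).mono ?_) hlim
  rintro z ⟨hz, hzs, hzv⟩
  exact mul_norm_le_norm_sub_of_ae_differentiableAt hs hX hT hXT hc hzs hzv hz

end MeanValue

section OperatorBounds

variable {𝕜 E F : Type*} [NontriviallyNormedField 𝕜] [NormedAddCommGroup E] [NormedSpace 𝕜 E]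
  [NormedAddCommGroup F] [NormedSpace 𝕜 F]

theorem ContinuousLinearEquiv.inv_mul_norm_le_norm_apply {W : E ≃L[𝕜] F} {μ : ℝ}
    (hW : ‖(W.symm : F →L[𝕜] E)‖ ≤ μ) (u : E) : μ⁻¹ * ‖u‖ ≤ ‖W u‖ := by
  rcases ((norm_nonneg _).trans hW).eq_or_lt with rfl | hμ
  · simp
  rw [inv_mul_le_iff₀ hμ]
  calc ‖u‖ = ‖(W.symm : F →L[𝕜] E) (W u)‖ := by simp
    _ ≤ ‖(W.symm : F →L[𝕜] E)‖ * ‖W u‖ := ContinuousLinearMap.le_opNorm _ _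
    _ ≤ μ * ‖W u‖ := by gcongr

theorem sub_mul_norm_le_norm_apply_of_mem_thickening {T : Set (E →L[𝕜] F)} {c r : ℝ}
    (hT : ∀ W ∈ T, ∀ u, c * ‖u‖ ≤ ‖W u‖) {M : E →L[𝕜] F} (hM : M ∈ thickening r T) (u : E) :
    (c - r) * ‖u‖ ≤ ‖M u‖ := by
  obtain ⟨W, hW, hMW⟩ := mem_thickening_iff.1 hM
  have hdiff : ‖(M - W) u‖ ≤ r * ‖u‖ := by
    rw [dist_eq_norm] at hMW
    exact ((M - W).le_opNorm u).trans (by gcongr)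
  calc (c - r) * ‖u‖ = c * ‖u‖ - r * ‖u‖ := sub_mul _ _ _
    _ ≤ ‖W u‖ - ‖(M - W) u‖ := by linarith [hT W hW u]
    _ ≤ ‖M u‖ := by
      have hWu : W u = M u - (M - W) u := by simp
      linarith [norm_sub_le (M u) ((M - W) u), congrArg norm hWu]

end OperatorBounds

section Clarke

variable {n : ℕ} {X : EuclideanSpace ℝ (Fin n) → EuclideanSpace ℝ (Fin n)}
  {p : EuclideanSpace ℝ (Fin n)}

theorem convex_clarkeJacobian : Convex ℝ (clarkeJacobian X p) := convex_convexHull ℝ _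

theorem mem_clarkeJacobian_of_tendsto {q : ℕ → EuclideanSpace ℝ (Fin n)}
    {D : ℕ → EuclideanSpace ℝ (Fin n) →L[ℝ] EuclideanSpace ℝ (Fin n)}
    {H : EuclideanSpace ℝ (Fin n) →L[ℝ] EuclideanSpace ℝ (Fin n)}
    (hD : ∀ k, HasFDerivAt X (D k) (q k)) (hq : Tendsto q atTop (𝓝 p))
    (hDH : Tendsto D atTop (𝓝 H)) : H ∈ clarkeJacobian X p :=
  subset_convexHull ℝ _ ⟨q, D, hD, hq, hDH⟩

/-- Jacobians near `p` are bounded, so they cluster only at elements of `clarkeJacobian X p`. -/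
theorem eventually_fderiv_mem_thickening_clarkeJacobian {K : ℝ≥0}
    {s : Set (EuclideanSpace ℝ (Fin n))} (hs : s ∈ 𝓝 p) (hX : LipschitzOnWith K X s) {r : ℝ}
    (hr : 0 < r) :
    ∀ᶠ q in 𝓝 p, DifferentiableAt ℝ X q → fderiv ℝ X q ∈ thickening r (clarkeJacobian X p) := by
  have hbound : ∀ᶠ q in 𝓝 p, ‖fderiv ℝ X q‖ ≤ K := by
    filter_upwards [eventually_mem_nhds_iff.2 hs] with q hq
    exact norm_fderiv_le_of_lipschitzOn ℝ hq hX
  by_contra h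
  obtain ⟨q, hqp, hq⟩ :=
    exists_seq_forall_of_frequently ((not_eventually.1 h).and_eventually hbound)
  simp only [Classical.not_imp] at hq
  obtain ⟨H, -, φ, hφ, hH⟩ := (isCompact_closedBall 0 (K : ℝ)).tendsto_subseq
    (x := fun k => fderiv ℝ X (q k)) fun k => mem_closedBall_zero_iff.2 (hq k).2
  have hHmem : H ∈ clarkeJacobian X p :=
    mem_clarkeJacobian_of_tendsto (fun k => (hq (φ k)).1.1.hasFDerivAt)
      (hqp.comp hφ.tendsto_atTop) hH
  obtain ⟨k, hk⟩ := (hH.eventually (isOpen_ball.mem_nhds (mem_ball_self hr))).exists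
  exact (hq (φ k)).1.2 (ball_subset_thickening hHmem r hk)

end Clarke

theorem error_bound_near_regular_zero_general {n : ℕ}
    (X : EuclideanSpace ℝ (Fin n) → EuclideanSpace ℝ (Fin n))
    (hX : LocallyLipschitz X)
    (pstar : EuclideanSpace ℝ (Fin n)) (hzero : X pstar = 0)
    (ε lam L δ₀ : ℝ) (hlam : 0 < lam) (hδ₀ : 0 < δ₀)
    (hεlam : ε * lam < 1)
    (hinv : ∀ p ∈ ball pstar δ₀, ∀ V ∈ clarkeJacobian X p,
      (∃ W : EuclideanSpace ℝ (Fin n) ≃L[ℝ] EuclideanSpace ℝ (Fin n),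
        (W : EuclideanSpace ℝ (Fin n) →L[ℝ] EuclideanSpace ℝ (Fin n)) = V ∧
        ‖(W.symm : EuclideanSpace ℝ (Fin n) →L[ℝ] EuclideanSpace ℝ (Fin n))‖ ≤
          lam / (1 - ε * lam)) ∧ ‖V‖ ≤ L) :
    ∃ δ > (0 : ℝ), ∃ C > (0 : ℝ),
      (∀ p ∈ ball pstar δ, ‖p - pstar‖ ≤ C * ‖X p‖) ∧
      (∀ p ∈ ball pstar δ, X p = 0 → p = pstar) := by
  set μ := lam / (1 - ε * lam)
  have hμ : 0 < μ := div_pos hlam (by linarith)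
  have hK : ∀ V ∈ clarkeJacobian X pstar, ∀ u, μ⁻¹ * ‖u‖ ≤ ‖V u‖ := by
    intro V hV u
    obtain ⟨⟨W, rfl, hW⟩, -⟩ := hinv pstar (mem_ball_self hδ₀) V hV
    exact W.inv_mul_norm_le_norm_apply hW u
  obtain ⟨K, s, hs, hlip⟩ := hX pstar
  obtain ⟨δ, hδ, hball⟩ := eventually_nhds_iff_ball.1
    ((eventually_fderiv_mem_thickening_clarkeJacobian hs hlip (half_pos (inv_pos.2 hμ))).and hs)
  have key : ∀ p ∈ ball pstar δ, ‖p - pstar‖ ≤ 2 * μ * ‖X p‖ := by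
    intro p hp
    have := mul_norm_sub_le_norm_sub_of_fderiv_mem isOpen_ball (convex_ball _ _)
      (hlip.mono fun q hq => (hball q hq).2) (convex_clarkeJacobian.thickening _)
      (fun q hq => (hball q hq).1)
      (fun M hM => sub_mul_norm_le_norm_apply_of_mem_thickening hK hM)
      (mem_ball_self hδ) hp
    rwa [hzero, sub_zero, sub_half, ← inv_mul_eq_div, ← mul_inv,
      inv_mul_le_iff₀ (by positivity)] at this
  refine ⟨δ, hδ, 2 * μ, by positivity, key, fun p hp hp0 => ?_⟩
  simpa [hp0, sub_eq_zero] using key p hp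

/-- error bound near a regular zero: `‖p - p*‖ ≤ C‖X(p)‖` on a ball
around `p*`; in particular `p*` is an isolated zero of `X`. -/
theorem error_bound_near_regular_zero {n : ℕ}
    (X : EuclideanSpace ℝ (Fin n) → EuclideanSpace ℝ (Fin n))
    (hX : LocallyLipschitz X)
    (pstar : EuclideanSpace ℝ (Fin n)) (hzero : X pstar = 0)
    (ε lam L δ₀ : ℝ) (hε : 0 < ε) (hlam : 0 < lam) (hL : 0 < L) (hδ₀ : 0 < δ₀)
    (hεlam : ε * lam < 1)
    (hinv : ∀ p ∈ ball pstar δ₀, ∀ V ∈ clarkeJacobian X p,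
      (∃ W : EuclideanSpace ℝ (Fin n) ≃L[ℝ] EuclideanSpace ℝ (Fin n),
        (W : EuclideanSpace ℝ (Fin n) →L[ℝ] EuclideanSpace ℝ (Fin n)) = V ∧
        ‖(W.symm : EuclideanSpace ℝ (Fin n) →L[ℝ] EuclideanSpace ℝ (Fin n))‖ ≤
          lam / (1 - ε * lam)) ∧ ‖V‖ ≤ L) :
    ∃ δ > (0 : ℝ), ∃ C > (0 : ℝ),
      (∀ p ∈ ball pstar δ, ‖p - pstar‖ ≤ C * ‖X p‖) ∧
      (∀ p ∈ ball pstar δ, X p = 0 → p = pstar) :=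
  error_bound_near_regular_zero_general X hX pstar hzero ε lam L δ₀ hlam hδ₀ hεlam hinv
end

section
/- Let f : ℝⁿ → ℝ be continuously differentiable, σ ∈ (0, 1), p_k → p*, v_k → v* ≠ 0, and suppose α̅_k → 0 with α̅_k > 0 and f(p_k + α̅_k v_k) > f(p_k) + σ α̅_k ⟨∇f(p_k), v_k⟩ for all k, while ⟨∇f(p_k), v_k⟩ < 0 for all k. Then ⟨∇f(p*), v*⟩ = 0. -/
open Filter Topology Set
open scoped RealInnerProductSpace

/-!
If the Armijo test fails at step `α k`, the mean value theorem along the segment from `p k` to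
`p k + α k • v k` gives an intermediate point where the directional derivative exceeds
`σ ⟪∇f (p k), v k⟫`. As `α k → 0`, both the intermediate points and the `p k` tend to `p*`, so
continuity of `∇f` yields `σ ⟪∇f p*, v*⟫ ≤ ⟪∇f p*, v*⟫`; since `σ < 1`, this forces
`⟪∇f p*, v*⟫ ≥ 0`, while the descent condition gives `≤ 0`.
-/

section Gradient

variable {E : Type*} [NormedAddCommGroup E] [InnerProductSpace ℝ E] [CompleteSpace E]
  {f : E → ℝ}

theorem ContDiff.continuous_gradient (hf : ContDiff ℝ 1 f) : Continuous (gradient f) :=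
  (InnerProductSpace.toDual ℝ E).symm.continuous.comp (hf.continuous_fderiv one_ne_zero)

theorem DifferentiableAt.hasDerivAt_comp_add_smul {x v : E} {t : ℝ}
    (hf : DifferentiableAt ℝ f (x + t • v)) :
    HasDerivAt (fun s : ℝ => f (x + s • v)) ⟪gradient f (x + t • v), v⟫ t := by
  have hline : HasDerivAt (fun s : ℝ => x + s • v) v t := by
    simpa using ((hasDerivAt_id t).smul_const v).const_add x
  rw [← hf.hasGradientAt.fderiv_apply]
  exact hf.hasFDerivAt.comp_hasDerivAt t hline

theorem Differentiable.exists_inner_gradient_eq_slope (hf : Differentiable ℝ f) (x v : E)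
    {a : ℝ} (ha : 0 < a) :
    ∃ θ ∈ Ioo 0 a, ⟪gradient f (x + θ • v), v⟫ = (f (x + a • v) - f x) / a := by
  have hderiv (t : ℝ) := (hf (x + t • v)).hasDerivAt_comp_add_smul
  simpa using exists_hasDerivAt_eq_slope (fun s : ℝ => f (x + s • v)) _ ha
    (fun t _ => (hderiv t).continuousAt.continuousWithinAt) (fun t _ => hderiv t)

theorem Differentiable.exists_lt_inner_gradient_of_armijo_fails (hf : Differentiable ℝ f)
    {x v : E} {a σ c : ℝ} (ha : 0 < a) (hfail : f x + σ * a * c < f (x + a • v)) :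
    ∃ θ ∈ Ioo 0 a, σ * c < ⟪gradient f (x + θ • v), v⟫ := by
  obtain ⟨θ, hθ, hslope⟩ := hf.exists_inner_gradient_eq_slope x v ha
  refine ⟨θ, hθ, ?_⟩
  rw [hslope, lt_div_iff₀ ha]
  linarith

theorem Continuous.tendsto_inner_gradient (hf : Continuous (gradient f)) {ι : Type*}
    {l : Filter ι} {x w : ι → E} {x₀ w₀ : E} (hx : Tendsto x l (𝓝 x₀))
    (hw : Tendsto w l (𝓝 w₀)) :
    Tendsto (fun k => ⟪gradient f (x k), w k⟫) l (𝓝 ⟪gradient f x₀, w₀⟫) :=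
  ((hf.tendsto x₀).comp hx).inner hw

end Gradient

theorem stationarity_when_steps_vanish_general {n : ℕ}
    (f : EuclideanSpace ℝ (Fin n) → ℝ) (hf : ContDiff ℝ 1 f)
    (σ : ℝ) (hσ : σ ∈ Set.Ioo (0 : ℝ) 1)
    (p : ℕ → EuclideanSpace ℝ (Fin n)) (pstar : EuclideanSpace ℝ (Fin n))
    (hp : Tendsto p atTop (𝓝 pstar))
    (v : ℕ → EuclideanSpace ℝ (Fin n)) (vstar : EuclideanSpace ℝ (Fin n))
    (hv : Tendsto v atTop (𝓝 vstar))
    (α : ℕ → ℝ) (hαpos : ∀ k, 0 < α k) (hα0 : Tendsto α atTop (𝓝 0))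
    (hfail : ∀ k, f (p k + α k • v k) >
      f (p k) + σ * α k * (inner ℝ (gradient f (p k)) (v k) : ℝ))
    (hdesc : ∀ k, (inner ℝ (gradient f (p k)) (v k) : ℝ) < 0) :
    (inner ℝ (gradient f pstar) vstar : ℝ) = 0 := by
  choose θ hθ hθ_gt using fun k =>
    (hf.differentiable one_ne_zero).exists_lt_inner_gradient_of_armijo_fails (hαpos k) (hfail k)
  have hθ0 : Tendsto θ atTop (𝓝 0) :=
    tendsto_of_tendsto_of_tendsto_of_le_of_le tendsto_const_nhds hα0
      (fun k => (hθ k).1.le) (fun k => (hθ k).2.le)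
  have hq : Tendsto (fun k => p k + θ k • v k) atTop (𝓝 pstar) := by
    simpa using hp.add (hθ0.smul hv)
  have hslope_at_p := hf.continuous_gradient.tendsto_inner_gradient hp hv
  have hslope_at_q := hf.continuous_gradient.tendsto_inner_gradient hq hv
  have hle : σ * inner ℝ (gradient f pstar) vstar ≤ inner ℝ (gradient f pstar) vstar :=
    le_of_tendsto_of_tendsto' (hslope_at_p.const_mul σ) hslope_at_q fun k => (hθ_gt k).le
  have hnonpos : inner ℝ (gradient f pstar) vstar ≤ 0 :=
    le_of_tendsto' hslope_at_p fun k => (hdesc k).le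
  nlinarith [hσ.2]

/-- second case of the global convergence proof: if the backtracking
step sizes tend to zero while the Armijo test keeps failing, then the limit direction
is orthogonal to the gradient at the limit point. -/
theorem stationarity_when_steps_vanish {n : ℕ}
    (f : EuclideanSpace ℝ (Fin n) → ℝ) (hf : ContDiff ℝ 1 f)
    (σ : ℝ) (hσ : σ ∈ Set.Ioo (0 : ℝ) 1)
    (p : ℕ → EuclideanSpace ℝ (Fin n)) (pstar : EuclideanSpace ℝ (Fin n))
    (hp : Tendsto p atTop (𝓝 pstar))
    (v : ℕ → EuclideanSpace ℝ (Fin n)) (vstar : EuclideanSpace ℝ (Fin n))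
    (hv : Tendsto v atTop (𝓝 vstar)) (hvstar : vstar ≠ 0)
    (α : ℕ → ℝ) (hαpos : ∀ k, 0 < α k) (hα0 : Tendsto α atTop (𝓝 0))
    (hfail : ∀ k, f (p k + α k • v k) >
      f (p k) + σ * α k * (inner ℝ (gradient f (p k)) (v k) : ℝ))
    (hdesc : ∀ k, (inner ℝ (gradient f (p k)) (v k) : ℝ) < 0) :
    (inner ℝ (gradient f pstar) vstar : ℝ) = 0 :=
  stationarity_when_steps_vanish_general f hf σ hσ p pstar hp v vstar hv α hαpos hα0 hfail hdesc
end
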